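/- arXiv:2210.09703 — 2 statements merged into one kernel-verified Lean document; each statement's English description precedes it below -/
import Mathlib

section
/- Let W ⊆ C^ω be any objective and M a chromatic memory structure. If M suffices to play optimally for W in all finitely branching one-player arenas of Player 1, then W is M-strongly-monotone. -/
set_option autoImplicit false

namespace RegularMemory

/-- Concatenation of a finite word with an infinite word. -/
def wcat {C : Type} (w : List C) (x : ℕ → C) : ℕ → C := fun n =>
  if h : n < w.length then w.get ⟨n, h⟩ else x (n - w.length)

/-- The infinite word `w^ω` (junk value if `w` is empty). -/
noncomputable def wpow {C : Type} [Nonempty C] : List C → ℕ → C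
  | [] => fun _ => Classical.arbitrary C
  | (a :: l) => fun n => (a :: l).get ⟨n % (a :: l).length, Nat.mod_lt n (Nat.succ_pos _)⟩

/-- Winning continuations `w⁻¹W` of the finite word `w` for the objective `W`. -/
def contAfter {C : Type} (W : Set (ℕ → C)) (w : List C) : Set (ℕ → C) :=
  {x | wcat w x ∈ W}

/-- Prefix preorder `w₁ ⪯_W w₂`. -/
def prefLe {C : Type} (W : Set (ℕ → C)) (w₁ w₂ : List C) : Prop :=
  contAfter W w₁ ⊆ contAfter W w₂

/-- Strict prefix relation `w₁ ≺_W w₂`. -/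
def prefLt {C : Type} (W : Set (ℕ → C)) (w₁ w₂ : List C) : Prop :=
  prefLe W w₁ w₂ ∧ ¬ prefLe W w₂ w₁

/-- Comparability for the prefix preorder. -/
def PrefComparable {C : Type} (W : Set (ℕ → C)) (w₁ w₂ : List C) : Prop :=
  prefLe W w₁ w₂ ∨ prefLe W w₂ w₁

/-- The general reachability objective derived from `A`: infinite words with a prefix in `A`. -/
def ReachObj {C : Type} (A : Set (List C)) : Set (ℕ → C) :=
  {x | ∃ n : ℕ, (List.ofFn fun i : Fin n => x i) ∈ A}

/-- The general safety objective derived from `A`. -/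
def SafeObj {C : Type} (A : Set (List C)) : Set (ℕ → C) :=
  (ReachObj A)ᶜ

/-- The prefix preorder of `W` has finitely many equivalence classes. -/
def FinClasses {C : Type} (W : Set (ℕ → C)) : Prop :=
  (Set.range fun w : List C => contAfter W w).Finite

/-- The prefix preorder of `W` is well-founded:
every nonempty chain contains a minimal element. -/
def PrefWellFounded {C : Type} (W : Set (ℕ → C)) : Prop :=
  ∀ S : Set (List C), S.Nonempty →
    (∀ w₁ ∈ S, ∀ w₂ ∈ S, PrefComparable W w₁ w₂) →
    ∃ w₀ ∈ S, ∀ w ∈ S, ¬ prefLt W w w₀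

/-- Chromatic memory structure. -/
structure MemStruct (C : Type) where
  M : Type
  init : M
  upd : M → C → M

/-- Extension of the update function to finite words. -/
def MemStruct.updStar {C : Type} (N : MemStruct C) (m : N.M) (w : List C) : N.M :=
  w.foldl N.upd m

/-- The trivial one-state memory structure. -/
def trivMem (C : Type) : MemStruct C :=
  ⟨Unit, (), fun _ _ => ()⟩

/-- `W` is `N`-strongly-monotone. -/
def StronglyMonotone {C : Type} (N : MemStruct C) (W : Set (ℕ → C)) : Prop :=
  ∀ w₁ w₂ : List C,
    N.updStar N.init w₁ = N.updStar N.init w₂ → PrefComparable W w₁ w₂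

/-- `W` is `N`-progress-consistent. -/
def ProgressConsistent {C : Type} [Nonempty C] (N : MemStruct C) (W : Set (ℕ → C)) : Prop :=
  ∀ (m : N.M) (w₁ w₂ : List C),
    N.updStar N.init w₁ = m → N.updStar m w₂ = m →
    prefLt W w₁ (w₁ ++ w₂) → wcat w₁ (wpow w₂) ∈ W

/-- Two-player arena with colored edges; Player-1 vertices have outgoing edges
(so that strategies of Player 1 exist). -/
structure Arena (C : Type) where
  V : Type
  P1 : V → Prop
  E : Set (V × C × V)
  succ : ∀ v : V, P1 v → ∃ e ∈ E, e.1 = v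

namespace Arena

/-- Valid histories starting at a given vertex. -/
def HistFrom {C : Type} (A : Arena C) : A.V → List (A.V × C × A.V) → Prop
  | _, [] => True
  | v, e :: l => e ∈ A.E ∧ e.1 = v ∧ HistFrom A e.2.2 l

/-- Endpoint of a history. -/
def endFrom {C : Type} (A : Arena C) : A.V → List (A.V × C × A.V) → A.V
  | v, [] => v
  | _, e :: l => endFrom A e.2.2 l

/-- Infinite plays from a vertex. -/
def PlayFrom {C : Type} (A : Arena C) (v : A.V) (π : ℕ → A.V × C × A.V) : Prop :=
  (π 0).1 = v ∧ ∀ n : ℕ, π n ∈ A.E ∧ (π n).2.2 = (π (n + 1)).1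

/-- Colors along a play. -/
def playCol {C V : Type} (π : ℕ → V × C × V) : ℕ → C :=
  fun n => (π n).2.1

/-- Strategies of Player 1: on every valid history ending in a Player-1 vertex,
the strategy picks an edge leaving that vertex. -/
structure Strategy {C : Type} (A : Arena C) where
  next : A.V → List (A.V × C × A.V) → A.V × C × A.V
  legal : ∀ (v : A.V) (l : List (A.V × C × A.V)),
    A.HistFrom v l → A.P1 (A.endFrom v l) →
      next v l ∈ A.E ∧ (next v l).1 = A.endFrom v l

/-- A play from `v` is consistent with the strategy `σ`. -/
def Strategy.Consistent {C : Type} {A : Arena C} (σ : A.Strategy) (v : A.V)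
    (π : ℕ → A.V × C × A.V) : Prop :=
  ∀ n : ℕ, A.P1 (A.endFrom v (List.ofFn fun i : Fin n => π i)) →
    π n = σ.next v (List.ofFn fun i : Fin n => π i)

/-- `σ` is winning from `v` for the objective `W`. -/
def Strategy.WinningFrom {C : Type} {A : Arena C} (σ : A.Strategy)
    (W : Set (ℕ → C)) (v : A.V) : Prop :=
  ∀ π : ℕ → A.V × C × A.V, A.PlayFrom v π → σ.Consistent v π → playCol π ∈ W

/-- `σ` is optimal in `(A, W)`: winning from every vertex from which
Player 1 has some winning strategy. -/
def Strategy.Optimal {C : Type} {A : Arena C} (σ : A.Strategy) (W : Set (ℕ → C)) : Prop :=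
  ∀ v : A.V, (∃ σ' : A.Strategy, σ'.WinningFrom W v) → σ.WinningFrom W v

/-- `σ` is based on the memory structure `N`. -/
def Strategy.BasedOn {C : Type} {A : Arena C} (σ : A.Strategy) (N : MemStruct C) : Prop :=
  ∃ nxt : A.V → N.M → A.V × C × A.V,
    ∀ (v : A.V) (l : List (A.V × C × A.V)),
      A.HistFrom v l → A.P1 (A.endFrom v l) →
        σ.next v l = nxt (A.endFrom v l) (N.updStar N.init (l.map fun e => e.2.1))

/-- Finite arena: finitely many vertices and edges. -/
def IsFinite {C : Type} (A : Arena C) : Prop := Finite A.V ∧ A.E.Finite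

/-- Finitely branching arena. -/
def FinBranching {C : Type} (A : Arena C) : Prop :=
  ∀ v : A.V, {e ∈ A.E | e.1 = v}.Finite

/-- One-player arena of Player 1. -/
def OneP1 {C : Type} (A : Arena C) : Prop := ∀ v : A.V, A.P1 v

end Arena

/-- `N` suffices to play optimally for `W` in all arenas of the class `P`. -/
def SufficesIn {C : Type} (N : MemStruct C) (W : Set (ℕ → C))
    (P : Arena C → Prop) : Prop :=
  ∀ A : Arena C, P A → ∃ σ : A.Strategy, σ.BasedOn N ∧ σ.Optimal W

/-- Deterministic automaton (with complete transition function). -/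
structure DetAuto (C : Type) where
  Q : Type
  init : Q
  δ : Q → C → Q
  F : Set Q

/-- Extension of the transition function to finite words. -/
def DetAuto.δStar {C : Type} (D : DetAuto C) (q : D.Q) (w : List C) : D.Q :=
  w.foldl D.δ q

/-- Language recognized by `D`. -/
def DetAuto.lang {C : Type} (D : DetAuto C) : Set (List C) :=
  {w | D.δStar D.init w ∈ D.F}

/-- Prefix preorder extended to automaton states. -/
def statePrefLe {C : Type} (D : DetAuto C) (W : Set (ℕ → C)) (q₁ q₂ : D.Q) : Prop :=
  ∀ w₁ w₂ : List C,
    D.δStar D.init w₁ = q₁ → D.δStar D.init w₂ = q₂ → prefLe W w₁ w₂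

def statePrefLt {C : Type} (D : DetAuto C) (W : Set (ℕ → C)) (q₁ q₂ : D.Q) : Prop :=
  statePrefLe D W q₁ q₂ ∧ ¬ statePrefLe D W q₂ q₁

def StateComparable {C : Type} (D : DetAuto C) (W : Set (ℕ → C)) (q₁ q₂ : D.Q) : Prop :=
  statePrefLe D W q₁ q₂ ∨ statePrefLe D W q₂ q₁

/-- Monotone decomposition of `D` with `k` sets. -/
def MonotoneDecomposition {C : Type} (D : DetAuto C) (W : Set (ℕ → C))
    {k : ℕ} (Γ : Fin k → Set D.Q) : Prop :=
  (∀ q : D.Q, ∃ i : Fin k, q ∈ Γ i) ∧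
  (∀ (c : C) (i : Fin k), ∃ j : Fin k, (fun q => D.δ q c) '' Γ i ⊆ Γ j) ∧
  (∀ i : Fin k, ∀ q₁ ∈ Γ i, ∀ q₂ ∈ Γ i, StateComparable D W q₁ q₂)

end RegularMemory

/-!
Suppose `w₁` and `w₂` reach the same memory state but are incomparable: there are continuations
`a` and `b` with `w₁a, w₂b ∈ W` and `w₂a, w₁b ∉ W`. In the one-player arena in which `w₁` and `w₂`
lead to a common vertex offering the choice between spelling `a` and spelling `b`, Player 1 wins
from both starting vertices. A strategy based on the memory makes the same choice after `w₁` as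
after `w₂`, so it loses from one of them and is not optimal.
-/

namespace RegularMemory

variable {C : Type}

namespace Arena

variable {A : Arena C}

lemma endFrom_append (v : A.V) (l₁ l₂ : List (A.V × C × A.V)) :
    A.endFrom v (l₁ ++ l₂) = A.endFrom (A.endFrom v l₁) l₂ := by
  induction l₁ generalizing v with
  | nil => rfl
  | cons e l ih => exact ih e.2.2

lemma histFrom_append (v : A.V) (l₁ l₂ : List (A.V × C × A.V)) :
    A.HistFrom v (l₁ ++ l₂) ↔ A.HistFrom v l₁ ∧ A.HistFrom (A.endFrom v l₁) l₂ := by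
  induction l₁ generalizing v with
  | nil => simp [HistFrom, endFrom]
  | cons e l ih => simp only [List.cons_append, HistFrom, endFrom, ih, and_assoc]

lemma PlayFrom.tail {v : A.V} {π : ℕ → A.V × C × A.V} (h : A.PlayFrom v π) :
    A.PlayFrom (π 0).2.2 (fun n => π (n + 1)) :=
  ⟨(h.2 0).2.symm, fun n => h.2 (n + 1)⟩

lemma PlayFrom.endFrom_ofFn {v : A.V} {π : ℕ → A.V × C × A.V} (h : A.PlayFrom v π) (n : ℕ) :
    A.endFrom v (List.ofFn fun i : Fin n => π i) = (π n).1 := by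
  induction n with
  | zero => exact h.1.symm
  | succ n ih =>
    rw [List.ofFn_succ', List.concat_eq_append, endFrom_append]
    simp only [Fin.val_castSucc, Fin.val_last, ih]
    exact (h.2 n).2

namespace Strategy

variable (σ : A.Strategy) (v : A.V)

def history : ℕ → List (A.V × C × A.V)
  | 0 => []
  | n + 1 => history n ++ [σ.next v (history n)]

def play (n : ℕ) : A.V × C × A.V :=
  σ.next v (σ.history v n)

lemma history_eq_ofFn (n : ℕ) : σ.history v n = List.ofFn fun i : Fin n => σ.play v i := by
  induction n with
  | zero => rfl
  | succ n ih =>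
    rw [List.ofFn_succ', List.concat_eq_append]
    simp only [Fin.val_castSucc, Fin.val_last, ← ih]
    rfl

lemma histFrom_history (hA : A.OneP1) (n : ℕ) : A.HistFrom v (σ.history v n) := by
  induction n with
  | zero => trivial
  | succ n ih =>
    obtain ⟨hE, hfst⟩ := σ.legal v _ ih (hA _)
    exact (histFrom_append _ _ _).2 ⟨ih, hE, hfst, trivial⟩

lemma playFrom_play (hA : A.OneP1) : A.PlayFrom v (σ.play v) := by
  refine ⟨(σ.legal v [] trivial (hA _)).2,
    fun n => ⟨(σ.legal v _ (σ.histFrom_history v hA n) (hA _)).1, ?_⟩⟩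
  rw [play, play, (σ.legal v _ (σ.histFrom_history v hA (n + 1)) (hA _)).2, history,
    endFrom_append]
  rfl

lemma consistent_play : σ.Consistent v (σ.play v) := by
  intro n _
  rw [← history_eq_ofFn]
  rfl

lemma Optimal.playCol_play_mem {W : Set (ℕ → C)} {σ : A.Strategy} (hσ : σ.Optimal W)
    (hA : A.OneP1) {v : A.V} {σ' : A.Strategy} (hσ' : σ'.WinningFrom W v) :
    playCol (σ.play v) ∈ W :=
  hσ v ⟨σ', hσ'⟩ _ (σ.playFrom_play v hA) (σ.consistent_play v)

end Strategy

end Arena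

open Arena

/-- The edges of `spellArena`: vertex `inl l` still has to spell the finite word `l` before
reaching the choice vertex `inl []`, vertex `inr z` spells the infinite word `z`, and the edge
`spellEdge y (inl [])` starts spelling `y`. -/
def spellEdge (y : ℕ → C) : List C ⊕ (ℕ → C) → (List C ⊕ (ℕ → C)) × C × (List C ⊕ (ℕ → C))
  | .inl [] => (.inl [], y 0, .inr fun n => y (n + 1))
  | .inl (c :: l) => (.inl (c :: l), c, .inl l)
  | .inr z => (.inr z, z 0, .inr fun n => z (n + 1))

lemma spellEdge_fst (y : ℕ → C) (v : List C ⊕ (ℕ → C)) : (spellEdge y v).1 = v := by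
  rcases v with (_ | _) | _ <;> rfl

abbrev spellArena (a b : ℕ → C) : Arena C where
  V := List C ⊕ (ℕ → C)
  P1 _ := True
  E := {e | ∃ y ∈ ({a, b} : Set (ℕ → C)), e = spellEdge y e.1}
  succ v _ := ⟨spellEdge a v, ⟨a, Set.mem_insert a _, by rw [spellEdge_fst]⟩, spellEdge_fst a v⟩

lemma spellArena_finBranching (a b : ℕ → C) : (spellArena a b).FinBranching := fun v =>
  ((Set.toFinite {a, b}).image fun y => spellEdge y v).subset
    (by rintro e ⟨⟨y, hy, he⟩, rfl⟩; exact ⟨y, hy, he.symm⟩)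

lemma spellArena_oneP1 (a b : ℕ → C) : (spellArena a b).OneP1 := fun _ => trivial

variable {a b : ℕ → C}

lemma spellArena_playFrom_inl {w : List C} {π : ℕ → (spellArena a b).V × C × (spellArena a b).V}
    (h : (spellArena a b).PlayFrom (.inl w) π) :
    (List.ofFn fun i : Fin w.length => playCol π i) = w ∧ (π w.length).1 = .inl [] := by
  induction w generalizing π with
  | nil => exact ⟨rfl, h.1⟩
  | cons c l ih =>
    obtain ⟨y, -, h₀⟩ := (h.2 0).1
    rw [h.1] at h₀
    obtain ⟨hcol, hend⟩ := ih (h₀ ▸ h.tail)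
    refine ⟨?_, hend⟩
    conv_rhs => rw [← hcol]
    rw [List.ofFn_succ]
    simp only [playCol, Fin.val_zero, Fin.val_succ, h₀]
    rfl

lemma spellArena_playCol {w : List C} {y : ℕ → C}
    {π : ℕ → (spellArena a b).V × C × (spellArena a b).V}
    (h : (spellArena a b).PlayFrom (.inl w) π) (hy : π w.length = spellEdge y (.inl [])) :
    playCol π = wcat w y := by
  have hsuffix : ∀ k, (π (w.length + k)).2 = (y k, .inr fun i => y (i + k + 1)) := by
    intro k
    induction k with
    | zero => exact congrArg Prod.snd hy
    | succ k ih =>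
      obtain ⟨z, -, hz⟩ := (h.2 (w.length + (k + 1))).1
      have hfst : (π (w.length + (k + 1))).1 = .inr fun i => y (i + k + 1) := by
        have := (h.2 (w.length + k)).2
        rw [ih] at this
        exact this.symm
      rw [hz, hfst]
      simp only [spellEdge, Nat.zero_add]
      ring_nf
  funext n
  unfold wcat
  split_ifs with hn
  · exact ((List.getElem_of_eq (spellArena_playFrom_inl h).1 (by simpa using hn)).symm.trans
      (List.getElem_ofFn _)).symm
  · have := congrArg Prod.fst (hsuffix (n - w.length))
    rw [Nat.add_sub_cancel' (not_lt.mp hn)] at this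
    exact this

def spellStrategy {y : ℕ → C} (hy : y ∈ ({a, b} : Set (ℕ → C))) : (spellArena a b).Strategy where
  next v l := spellEdge y ((spellArena a b).endFrom v l)
  legal _ _ _ _ := ⟨⟨y, hy, by rw [spellEdge_fst]⟩, spellEdge_fst _ _⟩

lemma spellStrategy_winningFrom {W : Set (ℕ → C)} {y : ℕ → C} (hy : y ∈ ({a, b} : Set (ℕ → C)))
    {w : List C} (hw : wcat w y ∈ W) : (spellStrategy hy).WinningFrom W (.inl w) := by
  intro π hπ hcons
  have hchoice : π w.length = spellEdge y (.inl []) := by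
    rw [hcons w.length trivial]
    show spellEdge y _ = _
    rw [hπ.endFrom_ofFn, (spellArena_playFrom_inl hπ).2]
  rwa [spellArena_playCol hπ hchoice]

lemma spellArena_playCol_play_of_basedOn {N : MemStruct C}
    {σ : (spellArena a b).Strategy} (hσ : σ.BasedOn N) (w₀ : List C) :
    ∃ y ∈ ({a, b} : Set (ℕ → C)), ∀ w, N.updStar N.init w = N.updStar N.init w₀ →
      playCol (σ.play (.inl w)) = wcat w y := by
  obtain ⟨nxt, hnxt⟩ := hσ
  have hplay (w : List C) := σ.playFrom_play (.inl w) (spellArena_oneP1 a b)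
  have hchoice (w : List C) : σ.play (.inl w) w.length = nxt (.inl []) (N.updStar N.init w) := by
    obtain ⟨hcol, hend⟩ := spellArena_playFrom_inl (hplay w)
    rw [Strategy.play, hnxt _ _ (σ.histFrom_history _ (spellArena_oneP1 a b) _) trivial,
      σ.history_eq_ofFn, (hplay w).endFrom_ofFn, hend, List.map_ofFn]
    exact congrArg _ (congrArg _ hcol)
  obtain ⟨y, hy, hedge⟩ := ((hplay w₀).2 w₀.length).1
  refine ⟨y, hy, fun w hw => spellArena_playCol (hplay w) ?_⟩
  rw [hchoice, hw, ← hchoice w₀, hedge, (spellArena_playFrom_inl (hplay w₀)).2]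

theorem strongMonotony_necessary_general_general {C : Type}
    (W : Set (ℕ → C)) (N : MemStruct C)
    (hsuff : SufficesIn N W (fun A => A.FinBranching ∧ A.OneP1)) :
    StronglyMonotone N W := by
  intro w₁ w₂ hmem
  by_contra hcomp
  simp only [PrefComparable, prefLe, contAfter, Set.not_subset, Set.mem_ofPred_eq, not_or] at hcomp
  obtain ⟨⟨a, ha₁, ha₂⟩, b, hb₂, hb₁⟩ := hcomp
  obtain ⟨σ, hσN, hσopt⟩ :=
    hsuff (spellArena a b) ⟨spellArena_finBranching a b, spellArena_oneP1 a b⟩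
  obtain ⟨y, hy, hσy⟩ := spellArena_playCol_play_of_basedOn hσN w₁
  have hwin {w : List C} {y' : ℕ → C} (hy' : y' ∈ ({a, b} : Set (ℕ → C))) (hw : wcat w y' ∈ W)
      (hm : N.updStar N.init w = N.updStar N.init w₁) : wcat w y ∈ W :=
    hσy w hm ▸ hσopt.playCol_play_mem (spellArena_oneP1 a b) (spellStrategy_winningFrom hy' hw)
  rcases hy with rfl | rfl
  · exact ha₂ (hwin (Or.inr rfl) hb₂ hmem.symm)
  · exact hb₁ (hwin (Or.inl rfl) ha₁ rfl)

/-- for any objective `W`, if the memory structure `N` suffices to play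
optimally for `W` in all finitely branching one-player arenas of Player 1, then `W`
is `N`-strongly-monotone. -/
theorem strongMonotony_necessary_general {C : Type} [Nonempty C]
    (W : Set (ℕ → C)) (N : MemStruct C)
    (hsuff : SufficesIn N W (fun A => A.FinBranching ∧ A.OneP1)) :
    StronglyMonotone N W :=
  strongMonotony_necessary_general_general W N hsuff

end RegularMemory
end

section
/- Let W be a general safety objective over C whose prefix preorder ⪯_W is well-founded (in particular this holds if W is regular), and let M be a chromatic memory structure. Then M suffices to play optimally for W in all arenas (of any cardinality) if and only if W is M-strongly-monotone. -/
set_option autoImplicit false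

/-! Sufficiency. The histories leading to a given memory state form a chain for `⪯_W`
(strong monotonicity), so by well-foundedness those from which Player 1 still wins at the current
vertex have a least element `u`. The first move of a winning strategy after `u` keeps Player 1
winning after every history of the chain, because each of them has at least the continuations of
`u`. Playing such moves preserves the invariant "Player 1 wins `w⁻¹W` from the current vertex",
where `w` is the history so far. For `W = Safe(A)`, reaching a prefix in `A` would make `w⁻¹W`
empty, and the empty objective is won only in the attractor to the vertices where Player 2 is
stuck; there the strategy descends along the ordinal rank of the attractor instead, so no
infinite play ever enters it.

Necessity. If `w₁`, `w₂` lead to the same memory state but `x₁ ∈ w₁⁻¹W \ w₂⁻¹W` and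
`x₂ ∈ w₂⁻¹W \ w₁⁻¹W`, consider the arena whose vertices are the sets of infinite words still to
be produced. From `wᵢ{x₁, x₂}` Player 1 wins, and after reading `wᵢ` both plays are at the
vertex `{x₁, x₂}` with the same memory state, so a strategy based on the memory continues both
with the same word, which loses after one of `w₁`, `w₂`. -/

namespace RegularMemory

section

variable {C : Type}

lemma ofFn_succ_eq_append {α : Type*} (f : ℕ → α) (n : ℕ) :
    (List.ofFn fun i : Fin (n + 1) => f i) = (List.ofFn fun i : Fin n => f i) ++ [f n] := by
  rw [List.ofFn_succ', List.concat_eq_append]; rfl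

lemma wcat_nil (x : ℕ → C) : wcat [] x = x := by
  funext n; simp [wcat]

lemma wcat_append (w₁ w₂ : List C) (x : ℕ → C) :
    wcat (w₁ ++ w₂) x = wcat w₁ (wcat w₂ x) := by
  funext n
  simp only [wcat, List.length_append, List.get_eq_getElem, List.getElem_append]
  split_ifs <;> first | rfl | omega | (congr 1; omega)

lemma wcat_singleton_succ (c : C) (x : ℕ → C) (n : ℕ) : wcat [c] x (n + 1) = x n := by
  simp [wcat]

lemma ofFn_wcat_length (w : List C) (x : ℕ → C) :
    (List.ofFn fun i : Fin w.length => wcat w x i) = w := by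
  simp [wcat, List.ofFn_getElem]

lemma contAfter_nil (W : Set (ℕ → C)) : contAfter W [] = W := by
  ext x; simp [contAfter, wcat_nil]

lemma contAfter_append (W : Set (ℕ → C)) (w₁ w₂ : List C) :
    contAfter W (w₁ ++ w₂) = contAfter (contAfter W w₁) w₂ := by
  ext x; simp [contAfter, wcat_append]

lemma prefLe.append_right {W : Set (ℕ → C)} {w₁ w₂ : List C} (h : prefLe W w₁ w₂)
    (w : List C) : prefLe W (w₁ ++ w) (w₂ ++ w) := by
  intro x hx
  rw [contAfter_append] at hx ⊢
  exact h hx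

lemma MemStruct.updStar_append (N : MemStruct C) (m : N.M) (w₁ w₂ : List C) :
    N.updStar m (w₁ ++ w₂) = N.updStar (N.updStar m w₁) w₂ :=
  List.foldl_append

lemma wcat_length_add (w : List C) (x : ℕ → C) (n : ℕ) : wcat w x (w.length + n) = x n := by
  simp [wcat]

lemma wcat_injective (w : List C) : Function.Injective (wcat w) :=
  fun x y h => funext fun n => by rw [← wcat_length_add w x, ← wcat_length_add w y, h]

lemma wcat_ofFn_of_lt (x y : ℕ → C) {n i : ℕ} (hi : i < n) :
    wcat (List.ofFn fun j : Fin n => x j) y i = x i := by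
  simp [wcat, hi]

lemma wcat_ofFn_shift (x : ℕ → C) (n : ℕ) :
    wcat (List.ofFn fun i : Fin n => x i) (fun k => x (n + k)) = x := by
  funext i
  by_cases hi : i < n
  · exact wcat_ofFn_of_lt x _ hi
  · simp [wcat, hi, Nat.add_sub_cancel' (not_lt.1 hi)]

lemma ofFn_wcat_length_add (w : List C) (x : ℕ → C) (k : ℕ) :
    (List.ofFn fun i : Fin (w.length + k) => wcat w x i) = w ++ List.ofFn fun i : Fin k => x i := by
  induction k with
  | zero => exact ofFn_wcat_length w x |>.trans (List.append_nil w).symm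
  | succ k ih => rw [← Nat.add_assoc, ofFn_succ_eq_append, ih, ofFn_succ_eq_append,
      wcat_length_add, List.append_assoc]

lemma contAfter_image_wcat (X : Set (ℕ → C)) (w : List C) : contAfter (wcat w '' X) w = X :=
  Set.ext fun _ => (wcat_injective w).mem_set_image

namespace Arena

variable {G : Arena C}

lemma endFrom_append_s4 (v : G.V) (l l' : List (G.V × C × G.V)) :
    G.endFrom v (l ++ l') = G.endFrom (G.endFrom v l) l' := by
  induction l generalizing v with
  | nil => rfl
  | cons e l ih => exact ih e.2.2

lemma histFrom_append_singleton (v : G.V) (l : List (G.V × C × G.V)) (e : G.V × C × G.V) :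
    G.HistFrom v (l ++ [e]) ↔ G.HistFrom v l ∧ e ∈ G.E ∧ e.1 = G.endFrom v l := by
  induction l generalizing v with
  | nil => simp [HistFrom, endFrom]
  | cons f l ih => simp only [List.cons_append, HistFrom, ih, endFrom, and_assoc]

lemma PlayFrom.histFrom_ofFn {v : G.V} {π : ℕ → G.V × C × G.V} (h : G.PlayFrom v π) (n : ℕ) :
    G.HistFrom v (List.ofFn fun i : Fin n => π i) ∧
      G.endFrom v (List.ofFn fun i : Fin n => π i) = (π n).1 := by
  induction n with
  | zero => exact ⟨trivial, h.1.symm⟩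
  | succ n ih =>
    rw [ofFn_succ_eq_append, histFrom_append_singleton, endFrom_append_s4]
    exact ⟨⟨ih.1, (h.2 n).1, ih.2.symm⟩, (h.2 n).2⟩

lemma map_ofFn_color (π : ℕ → G.V × C × G.V) (n : ℕ) :
    (List.ofFn fun i : Fin n => π i).map (fun e => e.2.1) =
      List.ofFn fun i : Fin n => playCol π i :=
  List.map_ofFn ..

def consPlay (e : G.V × C × G.V) (π : ℕ → G.V × C × G.V) : ℕ → G.V × C × G.V
  | 0 => e
  | n + 1 => π n

lemma PlayFrom.consPlay {v : G.V} {e : G.V × C × G.V} (he : e ∈ G.E) (hv : e.1 = v)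
    {π : ℕ → G.V × C × G.V} (hπ : G.PlayFrom e.2.2 π) : G.PlayFrom v (consPlay e π) := by
  refine ⟨hv, fun n => ?_⟩
  cases n with
  | zero => exact ⟨he, hπ.1.symm⟩
  | succ n => exact hπ.2 n

lemma playCol_consPlay (e : G.V × C × G.V) (π : ℕ → G.V × C × G.V) :
    playCol (consPlay e π) = wcat [e.2.1] (playCol π) := by
  funext n
  cases n with
  | zero => rfl
  | succ n => exact (wcat_singleton_succ e.2.1 (playCol π) n).symm

lemma ofFn_consPlay (e : G.V × C × G.V) (π : ℕ → G.V × C × G.V) (n : ℕ) :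
    (List.ofFn fun i : Fin (n + 1) => consPlay e π i) = e :: List.ofFn fun i : Fin n => π i :=
  List.ofFn_succ

open Classical in
noncomputable def Strategy.shift (τ : G.Strategy) (v : G.V) {e : G.V × C × G.V} (he : e ∈ G.E)
    (hv : e.1 = v) : G.Strategy where
  next u l := if u = e.2.2 then τ.next v (e :: l) else τ.next u l
  legal u l hl hu := by
    by_cases h : u = e.2.2
    · subst h
      rw [if_pos rfl]
      exact τ.legal v (e :: l) ⟨he, hv, hl⟩ hu
    · rw [if_neg h]
      exact τ.legal u l hl hu

lemma Strategy.WinningFrom.shift {τ : G.Strategy} {X : Set (ℕ → C)} {v : G.V}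
    (hτ : τ.WinningFrom X v) {e : G.V × C × G.V} (he : e ∈ G.E) (hv : e.1 = v)
    (hfirst : G.P1 v → e = τ.next v []) :
    (τ.shift v he hv).WinningFrom (contAfter X [e.2.1]) e.2.2 := by
  intro π hπ hcons
  have hcons' : τ.Consistent v (consPlay e π) := by
    intro n hn
    cases n with
    | zero => exact hfirst hn
    | succ n =>
      rw [ofFn_consPlay] at hn ⊢
      exact (hcons n hn).trans (if_pos rfl)
  have hwin := hτ _ (hπ.consPlay he hv) hcons'
  rwa [playCol_consPlay] at hwin

def Wins (G : Arena C) (X : Set (ℕ → C)) (v : G.V) : Prop :=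
  ∃ τ : G.Strategy, τ.WinningFrom X v

lemma Wins.mono {X Y : Set (ℕ → C)} {v : G.V} (h : G.Wins X v) (hXY : X ⊆ Y) : G.Wins Y v :=
  let ⟨τ, hτ⟩ := h
  ⟨τ, fun π hπ hc => hXY (hτ π hπ hc)⟩

lemma Wins.exists_edge {X : Set (ℕ → C)} {v : G.V} (h : G.Wins X v) (hv : G.P1 v) :
    ∃ e ∈ G.E, e.1 = v ∧ G.Wins (contAfter X [e.2.1]) e.2.2 := by
  obtain ⟨τ, hτ⟩ := h
  obtain ⟨he, he₁⟩ := τ.legal v [] trivial hv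
  exact ⟨τ.next v [], he, he₁, _, hτ.shift he he₁ fun _ => rfl⟩

lemma Wins.of_edge {X : Set (ℕ → C)} {v : G.V} (h : G.Wins X v) (hv : ¬ G.P1 v)
    {e : G.V × C × G.V} (he : e ∈ G.E) (he₁ : e.1 = v) :
    G.Wins (contAfter X [e.2.1]) e.2.2 :=
  let ⟨_, hτ⟩ := h
  ⟨_, hτ.shift he he₁ fun hv' => absurd hv' hv⟩

lemma exists_play_of_step (step : List (G.V × C × G.V) → G.V × C × G.V) (I : G.V → Prop)
    {v : G.V} (hv : I v)
    (hstep : ∀ l, G.HistFrom v l → I (G.endFrom v l) →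
      step l ∈ G.E ∧ (step l).1 = G.endFrom v l ∧ I (step l).2.2) :
    ∃ π, G.PlayFrom v π ∧ (∀ n, π n = step (List.ofFn fun i : Fin n => π i)) ∧
      ∀ n, I (π n).1 := by
  let hist : ℕ → List (G.V × C × G.V) := fun n => Nat.rec [] (fun _ l => l ++ [step l]) n
  let π : ℕ → G.V × C × G.V := fun n => step (hist n)
  have hofFn : ∀ n, hist n = List.ofFn fun i : Fin n => π i := by
    intro n
    induction n with
    | zero => rfl
    | succ n ih => rw [ofFn_succ_eq_append, ← ih]
  have hhist : ∀ n, G.HistFrom v (hist n) ∧ I (G.endFrom v (hist n)) := by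
    intro n
    induction n with
    | zero => exact ⟨trivial, hv⟩
    | succ n ih =>
      obtain ⟨hE, h₁, hI⟩ := hstep _ ih.1 ih.2
      change G.HistFrom v (hist n ++ [π n]) ∧ I (G.endFrom v (hist n ++ [π n]))
      rw [histFrom_append_singleton, endFrom_append_s4]
      exact ⟨⟨ih.1, hE, h₁⟩, hI⟩
  have hπ : ∀ n, π n ∈ G.E ∧ (π n).1 = G.endFrom v (hist n) ∧ I (π n).2.2 :=
    fun n => hstep _ (hhist n).1 (hhist n).2
  refine ⟨π, ⟨(hπ 0).2.1, fun n => ⟨(hπ n).1, ?_⟩⟩, fun n => congrArg step (hofFn n),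
    fun n => (hπ n).2.1 ▸ (hhist n).2⟩
  rw [(hπ (n + 1)).2.1]
  change _ = G.endFrom v (hist n ++ [π n])
  rw [endFrom_append_s4]
  rfl

lemma Strategy.exists_consistent_play (τ : G.Strategy) (I : G.V → Prop) {v : G.V} (hv : I v)
    (hP2 : ∀ u, I u → ¬ G.P1 u → ∃ e ∈ G.E, e.1 = u ∧ I e.2.2)
    (hP1 : ∀ l, G.HistFrom v l → G.P1 (G.endFrom v l) → I (G.endFrom v l) →
      I (τ.next v l).2.2) :
    ∃ π, G.PlayFrom v π ∧ τ.Consistent v π ∧ ∀ n, I (π n).1 := by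
  classical
  let step (l : List (G.V × C × G.V)) : G.V × C × G.V :=
    if G.P1 (G.endFrom v l) then τ.next v l
    else if h : ∃ e ∈ G.E, e.1 = G.endFrom v l ∧ I e.2.2 then h.choose else τ.next v l
  obtain ⟨π, hπ, hπstep, hI⟩ := exists_play_of_step step I hv fun l hl hI => by
    by_cases hp : G.P1 (G.endFrom v l)
    · simp only [step, if_pos hp]
      exact ⟨(τ.legal v l hl hp).1, (τ.legal v l hl hp).2, hP1 l hl hp hI⟩
    · have h := hP2 _ hI hp
      simp only [step, if_neg hp, dif_pos h]
      exact h.choose_spec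
  exact ⟨π, hπ, fun n hn => (hπstep n).trans (if_pos hn), hI⟩

lemma Strategy.Consistent.eq_of_basedOn {N : MemStruct C} {σ : G.Strategy}
    {nxt : G.V → N.M → G.V × C × G.V}
    (hnxt : ∀ v l, G.HistFrom v l → G.P1 (G.endFrom v l) →
      σ.next v l = nxt (G.endFrom v l) (N.updStar N.init (l.map fun e => e.2.1)))
    {v : G.V} {π : ℕ → G.V × C × G.V} (hcons : σ.Consistent v π) (hπ : G.PlayFrom v π)
    {n : ℕ} (hn : G.P1 (π n).1) :
    π n = nxt (π n).1 (N.updStar N.init (List.ofFn fun i : Fin n => playCol π i)) := by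
  obtain ⟨hhist, hend⟩ := hπ.histFrom_ofFn n
  refine (hcons n (hend ▸ hn)).trans ((hnxt v _ hhist (hend ▸ hn)).trans ?_)
  rw [hend, map_ofFn_color]

lemma OneP1.wins_of_play (hG : G.OneP1) {v : G.V} {π : ℕ → G.V × C × G.V} (hπ : G.PlayFrom v π)
    {X : Set (ℕ → C)} (hX : playCol π ∈ X) : G.Wins X v := by
  classical
  let τ : G.Strategy :=
    { next := fun u l => if u = v ∧ ∀ i : Fin l.length, l.get i = π i then π l.length
        else (G.succ (G.endFrom u l) (hG _)).choose
      legal := fun u l _ _ => by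
        split_ifs with h
        · obtain ⟨rfl, hl⟩ := h
          have hl' : (List.ofFn fun i : Fin l.length => π i) = l :=
            List.ext_get (by simp) fun i h₁ h₂ => by simpa using (hl ⟨i, h₂⟩).symm
          have hend := (hπ.histFrom_ofFn l.length).2
          rw [hl'] at hend
          exact ⟨(hπ.2 _).1, hend.symm⟩
        · exact (G.succ _ (hG _)).choose_spec }
  refine ⟨τ, fun π' _ hcons => ?_⟩
  have hπ'π : ∀ n, π' n = π n := by
    intro n
    induction n using Nat.strong_induction_on with
    | _ n ih =>
      rw [hcons n (hG _)]
      have hprefix : ∀ i : Fin (List.ofFn fun i : Fin n => π' i).length,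
          (List.ofFn fun i : Fin n => π' i).get i = π i := fun i => by
        simpa using ih i (by simpa using i.2)
      change ite _ _ _ = _
      rw [if_pos ⟨rfl, hprefix⟩, List.length_ofFn]
  rwa [← funext hπ'π] at hX

section Attractor

open OrdinalApprox

def attrStep (G : Arena C) : Set G.V →o Set G.V where
  toFun X := {v | (G.P1 v ∧ ∃ e ∈ G.E, e.1 = v ∧ e.2.2 ∈ X) ∨
    (¬ G.P1 v ∧ ∀ e ∈ G.E, e.1 = v → e.2.2 ∈ X)}
  monotone' X Y hXY v := by
    rintro (⟨hv, e, he, he₁, hX⟩ | ⟨hv, hX⟩)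
    · exact Or.inl ⟨hv, e, he, he₁, hXY hX⟩
    · exact Or.inr ⟨hv, fun e he he₁ => hXY (hX e he he₁)⟩

/-- The vertices from which Player 1 can force the play into a Player-2 vertex without outgoing
edges, so that no infinite play exists; `attrRank` is the stage at which a vertex enters. -/
def attr (G : Arena C) : Set G.V := (attrStep G).lfp

noncomputable def attrRank (G : Arena C) (v : G.V) : Ordinal.{0} :=
  sInf {a | v ∈ lfpApprox (attrStep G) ⊥ a}

lemma mem_attrStep_of_mem_attr {v : G.V} (hv : v ∈ G.attr) :
    v ∈ G.attrStep {u | u ∈ G.attr ∧ G.attrRank u < G.attrRank v} := by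
  have hmem : v ∈ lfpApprox (attrStep G) ⊥ (G.attrRank v) := by
    refine csInf_mem (s := {a | v ∈ lfpApprox (attrStep G) ⊥ a})
      ⟨Cardinal.ord (Order.succ (Cardinal.mk (Set G.V))), ?_⟩
    change v ∈ lfpApprox (attrStep G) ⊥ _
    rwa [lfpApprox_ord_eq_lfp]
  rw [lfpApprox] at hmem
  simp only [Set.bot_eq_empty, Set.iSup_eq_iUnion, Set.empty_subset, sup_of_le_right,
    Set.mem_iUnion, exists_prop] at hmem
  obtain ⟨b, hb, hvb⟩ := hmem
  have hsub : lfpApprox (attrStep G) ⊥ b ⊆ {u | u ∈ G.attr ∧ G.attrRank u < G.attrRank v} :=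
    fun u hu => ⟨lfpApprox_le_of_mem_fixedPoints (attrStep G) (attrStep G).map_lfp bot_le b hu,
      (csInf_le' (s := {a | u ∈ lfpApprox (attrStep G) ⊥ a}) hu).trans_lt hb⟩
  exact (attrStep G).monotone hsub hvb

lemma not_mem_attrStep_attr {v : G.V} (hv : v ∉ G.attr) : v ∉ G.attrStep G.attr := by
  rwa [attr, OrderHom.map_lfp]

lemma not_mem_attr_of_edge {v : G.V} (hv : v ∉ G.attr) (hP1 : G.P1 v) {e : G.V × C × G.V}
    (he : e ∈ G.E) (he₁ : e.1 = v) : e.2.2 ∉ G.attr :=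
  fun h => not_mem_attrStep_attr hv (Or.inl ⟨hP1, e, he, he₁, h⟩)

lemma exists_edge_not_mem_attr {v : G.V} (hv : v ∉ G.attr) (hP2 : ¬ G.P1 v) :
    ∃ e ∈ G.E, e.1 = v ∧ e.2.2 ∉ G.attr := by
  by_contra! h
  exact not_mem_attrStep_attr hv (Or.inr ⟨hP2, h⟩)

lemma not_mem_attr_of_rank_descent {v : ℕ → G.V}
    (hstep : ∀ n, v n ∈ G.attr → v (n + 1) ∈ G.attr ∧ G.attrRank (v (n + 1)) < G.attrRank (v n))
    (n : ℕ) : v n ∉ G.attr := by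
  intro hn
  have hall : ∀ k, v (n + k) ∈ G.attr := fun k => by
    induction k with
    | zero => exact hn
    | succ k ih => exact (hstep _ ih).1
  obtain ⟨k, hk⟩ := WellFounded.not_rel_apply_succ (r := (· < ·))
    fun k => G.attrRank (v (n + k))
  exact hk (hstep _ (hall k)).2

lemma Wins.mem_attr_of_empty {v : G.V} (h : G.Wins ∅ v) : v ∈ G.attr := by
  by_contra hv
  obtain ⟨τ, hτ⟩ := h
  obtain ⟨π, hπ, hcons, -⟩ := τ.exists_consistent_play (· ∉ G.attr) hv
    (fun _ hu hP2 => exists_edge_not_mem_attr hu hP2)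
    (fun l hl hP1 hI => not_mem_attr_of_edge hI hP1 (τ.legal v l hl hP1).1 (τ.legal v l hl hP1).2)
  exact hτ π hπ hcons

lemma exists_edge_attrRank_lt {v : G.V} (hv : v ∈ G.attr) (hP1 : G.P1 v) :
    ∃ e ∈ G.E, e.1 = v ∧ e.2.2 ∈ G.attr ∧ G.attrRank e.2.2 < G.attrRank v := by
  rcases mem_attrStep_of_mem_attr hv with ⟨-, e, he, he₁, hlt⟩ | ⟨hP2, -⟩
  · exact ⟨e, he, he₁, hlt⟩
  · exact absurd hP1 hP2

lemma attrRank_lt_of_edge {v : G.V} (hv : v ∈ G.attr) (hP2 : ¬ G.P1 v) {e : G.V × C × G.V}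
    (he : e ∈ G.E) (he₁ : e.1 = v) : e.2.2 ∈ G.attr ∧ G.attrRank e.2.2 < G.attrRank v := by
  rcases mem_attrStep_of_mem_attr hv with ⟨hP1, -⟩ | ⟨-, hlt⟩
  · exact absurd hP1 hP2
  · exact hlt e he he₁

end Attractor

end Arena

open Arena

lemma PrefWellFounded.exists_least {W : Set (ℕ → C)} (hwf : PrefWellFounded W)
    {S : Set (List C)} (hS : S.Nonempty) (hchain : ∀ w₁ ∈ S, ∀ w₂ ∈ S, PrefComparable W w₁ w₂) :
    ∃ u ∈ S, ∀ w ∈ S, prefLe W u w := by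
  obtain ⟨u, hu, hmin⟩ := hwf S hS hchain
  refine ⟨u, hu, fun w hw => ?_⟩
  rcases hchain u hu w hw with h | h
  · exact h
  · by_contra h'
    exact hmin w hw ⟨h, h'⟩

lemma contAfter_safeObj_of_mem {A : Set (List C)} {w : List C} (hw : w ∈ A) :
    contAfter (SafeObj A) w = ∅ :=
  Set.eq_empty_of_forall_notMem fun x hx => hx ⟨w.length, by rwa [ofFn_wcat_length]⟩

section Sufficiency

variable (N : MemStruct C) (W : Set (ℕ → C)) (G : Arena C)

def IsGoodMove (v : G.V) (m : N.M) (e : G.V × C × G.V) : Prop :=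
  e ∈ G.E ∧ e.1 = v ∧ (v ∈ G.attr → e.2.2 ∈ G.attr ∧ G.attrRank e.2.2 < G.attrRank v) ∧
    (v ∉ G.attr → ∀ w : List C, N.updStar N.init w = m →
      G.Wins (contAfter W w) v → G.Wins (contAfter W (w ++ [e.2.1])) e.2.2)

variable {N W G}

lemma exists_isGoodMove (hsm : StronglyMonotone N W) (hwf : PrefWellFounded W) {v : G.V}
    (hv : G.P1 v) (m : N.M) : ∃ e, IsGoodMove N W G v m e := by
  by_cases hattr : v ∈ G.attr
  · obtain ⟨e, he, he₁, hlt⟩ := exists_edge_attrRank_lt hattr hv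
    exact ⟨e, he, he₁, fun _ => hlt, fun h => absurd hattr h⟩
  let S : Set (List C) := {w | N.updStar N.init w = m ∧ G.Wins (contAfter W w) v}
  by_cases hS : S.Nonempty
  · obtain ⟨u, ⟨-, hu⟩, hleast⟩ := hwf.exists_least hS fun w₁ h₁ w₂ h₂ =>
      hsm w₁ w₂ (h₁.1.trans h₂.1.symm)
    obtain ⟨e, he, he₁, hwin⟩ := hu.exists_edge hv
    refine ⟨e, he, he₁, fun h => absurd h hattr, fun _ w hw hwin' => ?_⟩
    rw [← contAfter_append] at hwin
    exact hwin.mono ((hleast w ⟨hw, hwin'⟩).append_right [e.2.1])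
  · obtain ⟨e, he, he₁⟩ := G.succ v hv
    exact ⟨e, he, he₁, fun h => absurd h hattr, fun _ w hw hwin => absurd ⟨w, hw, hwin⟩ hS⟩

variable (N W G)

open Classical in
noncomputable def goodMove [Nonempty C] (v : G.V) (m : N.M) : G.V × C × G.V :=
  if h : ∃ e, IsGoodMove N W G v m e then h.choose
  else if hv : G.P1 v then (G.succ v hv).choose else (v, Classical.arbitrary C, v)

lemma goodMove_legal [Nonempty C] {v : G.V} (hv : G.P1 v) (m : N.M) :
    goodMove N W G v m ∈ G.E ∧ (goodMove N W G v m).1 = v := by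
  unfold goodMove
  split_ifs with h
  · exact ⟨h.choose_spec.1, h.choose_spec.2.1⟩
  · exact (G.succ v hv).choose_spec

noncomputable def memStrategy [Nonempty C] : G.Strategy where
  next v l := goodMove N W G (G.endFrom v l) (N.updStar N.init (l.map fun e => e.2.1))
  legal _ _ _ hv := goodMove_legal N W G hv _

lemma memStrategy_basedOn [Nonempty C] : (memStrategy N W G).BasedOn N :=
  ⟨goodMove N W G, fun _ _ _ _ => rfl⟩

variable {N W G}

lemma isGoodMove_of_consistent [Nonempty C] (hsm : StronglyMonotone N W)
    (hwf : PrefWellFounded W) {v₀ : G.V} {π : ℕ → G.V × C × G.V} (hπ : G.PlayFrom v₀ π)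
    (hcons : (memStrategy N W G).Consistent v₀ π) {n : ℕ} (hv : G.P1 (π n).1) :
    IsGoodMove N W G (π n).1 (N.updStar N.init (List.ofFn fun i : Fin n => playCol π i)) (π n) := by
  have hmove := hcons.eq_of_basedOn (nxt := goodMove N W G) (fun _ _ _ _ => rfl) hπ hv
  have hex :=
    exists_isGoodMove hsm hwf hv (N.updStar N.init (List.ofFn fun i : Fin n => playCol π i))
  rw [goodMove, dif_pos hex] at hmove
  have hgood := hex.choose_spec
  rwa [← hmove] at hgood

lemma memStrategy_optimal [Nonempty C] (hsafe : ∃ A : Set (List C), W = SafeObj A)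
    (hsm : StronglyMonotone N W) (hwf : PrefWellFounded W) : (memStrategy N W G).Optimal W := by
  obtain ⟨A, rfl⟩ := hsafe
  rintro v₀ ⟨τ, hτ⟩ π hπ hcons
  have hnext : ∀ n, (π n).2.2 = (π (n + 1)).1 := fun n => (hπ.2 n).2
  have hout : ∀ n, (π n).1 ∉ G.attr := not_mem_attr_of_rank_descent fun n hn => by
    rw [← hnext]
    by_cases hv : G.P1 (π n).1
    · exact (isGoodMove_of_consistent hsm hwf hπ hcons hv).2.2.1 hn
    · exact attrRank_lt_of_edge hn hv (hπ.2 n).1 rfl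
  have hwins : ∀ n, G.Wins (contAfter (SafeObj A) (List.ofFn fun i : Fin n => playCol π i))
      (π n).1 := by
    intro n
    induction n with
    | zero =>
      rw [List.ofFn_zero, contAfter_nil, hπ.1]
      exact ⟨τ, hτ⟩
    | succ n ih =>
      rw [ofFn_succ_eq_append, ← hnext]
      by_cases hv : G.P1 (π n).1
      · exact (isGoodMove_of_consistent hsm hwf hπ hcons hv).2.2.2 (hout n) _ rfl ih
      · rw [contAfter_append]
        exact ih.of_edge hv (hπ.2 n).1 rfl
  rintro ⟨K, hK⟩
  have hK' := hwins K
  rw [contAfter_safeObj_of_mem hK] at hK'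
  exact hout K hK'.mem_attr_of_empty

end Sufficiency

section Necessity

def residualArena (C : Type) : Arena C where
  V := {S : Set (ℕ → C) // S.Nonempty}
  P1 _ := True
  E := {e | e.2.2.1 = contAfter e.1.1 [e.2.1]}
  succ S _ := by
    obtain ⟨x, hx⟩ := S.2
    refine ⟨(S, x 0, ⟨contAfter S.1 [x 0], fun k => x (1 + k), ?_⟩), rfl, rfl⟩
    change wcat (List.ofFn fun i : Fin 1 => x i) (fun k => x (1 + k)) ∈ S.1
    rwa [wcat_ofFn_shift]

lemma residualArena_oneP1 : (residualArena C).OneP1 := fun _ => trivial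

lemma residualArena_vertex_eq {S : (residualArena C).V}
    {π : ℕ → (residualArena C).V × C × (residualArena C).V}
    (hπ : (residualArena C).PlayFrom S π) (n : ℕ) :
    (π n).1.1 = contAfter S.1 (List.ofFn fun i : Fin n => playCol π i) := by
  induction n with
  | zero => rw [hπ.1, List.ofFn_zero, contAfter_nil]
  | succ n ih =>
    rw [← (hπ.2 n).2, (hπ.2 n).1, ih, ofFn_succ_eq_append, contAfter_append]
    rfl

lemma residualArena_playCol_mem {S : (residualArena C).V}
    {π : ℕ → (residualArena C).V × C × (residualArena C).V}
    (hπ : (residualArena C).PlayFrom S π) (hS : S.1.Finite) : playCol π ∈ S.1 := by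
  by_contra hout
  have hdiff : ∀ s ∈ S.1, ∃ i, s i ≠ playCol π i := fun s hs =>
    Function.ne_iff.1 fun h => hout (h ▸ hs)
  choose! d hd using hdiff
  obtain ⟨K, hK⟩ := (hS.image d).bddAbove
  obtain ⟨y, hy⟩ := (π (K + 1)).1.2
  rw [residualArena_vertex_eq hπ] at hy
  have hlt : d _ < K + 1 := Nat.lt_succ_of_le (hK ⟨_, hy, rfl⟩)
  exact hd _ hy (wcat_ofFn_of_lt _ y hlt)

lemma residualArena_wins_of_mem {S : (residualArena C).V} {X : Set (ℕ → C)} {x : ℕ → C}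
    (hxS : x ∈ S.1) (hxX : x ∈ X) : (residualArena C).Wins X S := by
  have hne : ∀ n, (contAfter S.1 (List.ofFn fun i : Fin n => x i)).Nonempty := fun n =>
    ⟨fun k => x (n + k), show wcat _ _ ∈ S.1 by rwa [wcat_ofFn_shift]⟩
  let π : ℕ → (residualArena C).V × C × (residualArena C).V := fun n =>
    (⟨_, hne n⟩, x n, ⟨_, hne (n + 1)⟩)
  have hπ : (residualArena C).PlayFrom S π := by
    refine ⟨Subtype.ext (by simp [π, contAfter_nil]), fun n => ⟨?_, rfl⟩⟩
    change contAfter S.1 (List.ofFn fun i : Fin (n + 1) => x i) = _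
    rw [ofFn_succ_eq_append, contAfter_append]
  exact residualArena_oneP1.wins_of_play hπ hxX

lemma residualArena_continuation_eq {N : MemStruct C} {σ : (residualArena C).Strategy}
    (hσ : σ.BasedOn N) {S₁ S₂ : (residualArena C).V} {w₁ w₂ : List C}
    (hres : contAfter S₁.1 w₁ = contAfter S₂.1 w₂)
    (hmem : N.updStar N.init w₁ = N.updStar N.init w₂)
    {π₁ π₂ : ℕ → (residualArena C).V × C × (residualArena C).V}
    (hπ₁ : (residualArena C).PlayFrom S₁ π₁) (hπ₂ : (residualArena C).PlayFrom S₂ π₂)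
    (hcons₁ : σ.Consistent S₁ π₁) (hcons₂ : σ.Consistent S₂ π₂) {y₁ y₂ : ℕ → C}
    (hy₁ : playCol π₁ = wcat w₁ y₁) (hy₂ : playCol π₂ = wcat w₂ y₂) : y₁ = y₂ := by
  obtain ⟨nxt, hnxt⟩ := hσ
  have hstep : ∀ k, (List.ofFn fun i : Fin k => y₁ i) = (List.ofFn fun i : Fin k => y₂ i) →
      y₁ k = y₂ k := by
    intro k hk
    have hv : (π₁ (w₁.length + k)).1 = (π₂ (w₂.length + k)).1 := Subtype.ext <| by
      rw [residualArena_vertex_eq hπ₁, residualArena_vertex_eq hπ₂, hy₁, hy₂, ofFn_wcat_length_add,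
        ofFn_wcat_length_add, contAfter_append, contAfter_append, hres, hk]
    have hmove : π₁ (w₁.length + k) = π₂ (w₂.length + k) := by
      rw [hcons₁.eq_of_basedOn hnxt hπ₁ trivial, hcons₂.eq_of_basedOn hnxt hπ₂ trivial, hv, hy₁,
        hy₂, ofFn_wcat_length_add, ofFn_wcat_length_add, MemStruct.updStar_append,
        MemStruct.updStar_append, hmem, hk]
    rw [← wcat_length_add w₁ y₁, ← wcat_length_add w₂ y₂, ← hy₁, ← hy₂]
    exact congrArg (fun e => e.2.1) hmove
  have hprefix : ∀ k, (List.ofFn fun i : Fin k => y₁ i) = List.ofFn fun i : Fin k => y₂ i := by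
    intro k
    induction k with
    | zero => rfl
    | succ k ih => rw [ofFn_succ_eq_append, ofFn_succ_eq_append, ih, hstep k ih]
  exact funext fun k => hstep k (hprefix k)

theorem StronglyMonotone.of_sufficesIn {N : MemStruct C} {W : Set (ℕ → C)}
    (hsuf : SufficesIn N W fun _ => True) : StronglyMonotone N W := by
  intro w₁ w₂ hmem
  by_contra hinc
  obtain ⟨x₁, hx₁, hx₁'⟩ := Set.not_subset.1 (not_or.1 hinc).1
  obtain ⟨x₂, hx₂, hx₂'⟩ := Set.not_subset.1 (not_or.1 hinc).2
  obtain ⟨σ, hσ, hopt⟩ := hsuf (residualArena C) trivial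
  let X : Set (ℕ → C) := {x₁, x₂}
  let start (w : List C) : (residualArena C).V := ⟨wcat w '' X, _, x₁, Or.inl rfl, rfl⟩
  have hplay : ∀ w, ∀ x ∈ X, wcat w x ∈ W → ∃ π y, (residualArena C).PlayFrom (start w) π ∧
      σ.Consistent (start w) π ∧ y ∈ X ∧ playCol π = wcat w y ∧ wcat w y ∈ W := by
    intro w x hx hxW
    obtain ⟨π, hπ, hcons, -⟩ := σ.exists_consistent_play (fun _ => True) trivial
      (fun _ _ h => absurd trivial h) fun _ _ _ _ => trivial
    obtain ⟨y, hy, hcol⟩ := residualArena_playCol_mem (S := start w) hπ (X.toFinite.image _)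
    have hwin := hopt (start w) (residualArena_wins_of_mem ⟨x, hx, rfl⟩ hxW) π hπ hcons
    exact ⟨π, y, hπ, hcons, hy, hcol.symm, hcol ▸ hwin⟩
  obtain ⟨π₁, y₁, hπ₁, hcons₁, hy₁, hcol₁, hW₁⟩ := hplay w₁ x₁ (Or.inl rfl) hx₁
  obtain ⟨π₂, y₂, hπ₂, hcons₂, -, hcol₂, hW₂⟩ := hplay w₂ x₂ (Or.inr rfl) hx₂
  have hres : contAfter (start w₁).1 w₁ = contAfter (start w₂).1 w₂ :=
    (contAfter_image_wcat X w₁).trans (contAfter_image_wcat X w₂).symm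
  obtain rfl := residualArena_continuation_eq hσ hres hmem hπ₁ hπ₂ hcons₁ hcons₂ hcol₁ hcol₂
  rcases hy₁ with rfl | rfl
  · exact hx₁' hW₂
  · exact hx₂' hW₁

end Necessity

end

/-- characterization for safety objectives with well-founded prefix
preorder: `N` suffices to play optimally for `W` in all arenas iff `W` is
`N`-strongly-monotone. -/
theorem safety_characterization_wellFounded {C : Type} [Nonempty C]
    (W : Set (ℕ → C))
    (hsafe : ∃ A : Set (List C), W = SafeObj A)
    (hwf : PrefWellFounded W)
    (N : MemStruct C) :
    SufficesIn N W (fun _ => True) ↔ StronglyMonotone N W := by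
  refine ⟨StronglyMonotone.of_sufficesIn, fun hsm G _ => ?_⟩
  exact ⟨memStrategy N W G, memStrategy_basedOn N W G, memStrategy_optimal hsafe hsm hwf⟩

end RegularMemory
end
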